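/- For α, β ∈ (ℕ \ {1})^ℕ, define M_α(p) = Σ_{i=1}^∞ max{n ∈ ℕ₀ : p^n divides α(i)} for each prime p (valued in ℕ₀ ∪ {∞}). If M_α(p) = M_β(p) for every prime p, then the adding machines (Δ_α, φ_α) and (Δ_β, φ_β) are topologically conjugate. -/
import Mathlib

open Set ENNReal

/-- Successor mod m on Fin m. -/
def finSucc {m : ℕ} (x : Fin m) : Fin m := ⟨(x.val + 1) % m, Nat.mod_lt _ x.pos⟩

/-- Auxiliary recursion defining the add-one-with-carry map on Δ_α = Π i, Fin (α i). -/
def phiAux (α : ℕ → ℕ) (x : ∀ i, Fin (α i)) : (i : ℕ) → Fin (α i)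
  | 0 => finSucc (x 0)
  | i + 1 => if (x i).val ≤ (phiAux α x i).val then x (i + 1) else finSucc (x (i + 1))

/-- The adding machine (odometer) map φ_α on Δ_α = Π i, Fin (α i). -/
def phi (α : ℕ → ℕ) (x : ∀ i, Fin (α i)) : ∀ i, Fin (α i) := fun i => phiAux α x i

namespace BK

variable {α β : ℕ → ℕ}

def P (α : ℕ → ℕ) (n : ℕ) : ℕ := ∏ i ∈ Finset.range n, α i

def V (α : ℕ → ℕ) (x : ∀ i, Fin (α i)) (n : ℕ) : ℕ :=
  ∑ i ∈ Finset.range n, (x i).val * P α i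

lemma P_pos (hα : ∀ i, 2 ≤ α i) (n : ℕ) : 0 < P α n :=
  Finset.prod_pos fun i _ => by have := hα i; omega

lemma P_succ (n : ℕ) : P α (n + 1) = P α n * α n := Finset.prod_range_succ _ _

lemma P_dvd {m n : ℕ} (h : m ≤ n) : P α m ∣ P α n :=
  Finset.prod_dvd_prod_of_subset _ _ _ (Finset.range_subset_range.2 h)

lemma V_succ (x : ∀ i, Fin (α i)) (n : ℕ) :
    V α x (n + 1) = V α x n + (x n).val * P α n := Finset.sum_range_succ _ _

lemma V_add_one_le (hα : ∀ i, 2 ≤ α i) (x : ∀ i, Fin (α i)) (n : ℕ) :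
    V α x n + 1 ≤ P α n := by
  induction n with
  | zero => simp [V, P]
  | succ n ih =>
      rw [V_succ, P_succ]
      have hx : (x n).val + 1 ≤ α n := (x n).isLt
      have hP : 0 < P α n := P_pos hα n
      have hmul : (x n).val * P α n ≤ (α n - 1) * P α n :=
        Nat.mul_le_mul_right _ (by omega)
      have heq : (α n - 1) * P α n + P α n = P α n * α n := by
        rw [← Nat.succ_mul, Nat.succ_eq_add_one, Nat.sub_add_cancel (by have := hα n; omega),
          Nat.mul_comm]
      omega

lemma V_lt (hα : ∀ i, 2 ≤ α i) (x : ∀ i, Fin (α i)) (n : ℕ) : V α x n < P α n :=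
  V_add_one_le hα x n

lemma V_modeq (x : ∀ i, Fin (α i)) {m n : ℕ} (h : m ≤ n) :
    V α x n ≡ V α x m [MOD P α m] := by
  induction n with
  | zero => have : m = 0 := Nat.le_zero.1 h; subst this; rfl
  | succ n ih =>
      rcases Nat.lt_or_ge m (n + 1) with hlt | hge
      · have hmn : m ≤ n := by omega
        have hdvd : P α m ∣ (x n).val * P α n :=
          (P_dvd hmn).trans (Dvd.intro_left _ rfl)
        have h0 : V α x n + (x n).val * P α n ≡ V α x n + 0 [MOD P α m] :=
          Nat.ModEq.add_left _ ((Nat.modEq_zero_iff_dvd).2 hdvd)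
        rw [add_zero] at h0
        exact (V_succ x n ▸ h0).trans (ih hmn)
      · have : m = n + 1 := by omega
        subst this; rfl

/-- digit recovery: the `n`-th digit from values. -/
lemma digit_eq (hα : ∀ i, 2 ≤ α i) (x : ∀ i, Fin (α i)) (n : ℕ) :
    (x n).val = V α x (n + 1) / P α n := by
  rw [V_succ, mul_comm ((x n).val) (P α n), Nat.add_mul_div_left _ _ (P_pos hα n),
    Nat.div_eq_of_lt (V_lt hα x n), zero_add]

lemma ext_of_V (hα : ∀ i, 2 ≤ α i) {x y : ∀ i, Fin (α i)}
    (hxy : ∀ n, V α x n = V α y n) : x = y := by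
  funext n
  exact Fin.ext (by rw [digit_eq hα x n, digit_eq hα y n, hxy])


lemma succ_mod_iff {m a : ℕ} (h2 : 2 ≤ m) (ha : a < m) : a ≤ (a + 1) % m ↔ a + 1 < m := by
  rcases lt_or_eq_of_le (Nat.succ_le_of_lt ha) with h | h
  · rw [Nat.mod_eq_of_lt h]; omega
  · have h' : a + 1 = m := h
    rw [h', Nat.mod_self]; omega

lemma sub_one_mul_add {m p : ℕ} (h2 : 2 ≤ m) : (m - 1) * p + p = p * m := by
  rw [← Nat.succ_mul, Nat.succ_eq_add_one, Nat.sub_add_cancel (by omega), Nat.mul_comm]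

lemma V_succ_lt (hα : ∀ i, 2 ≤ α i) (x : ∀ i, Fin (α i)) (n : ℕ)
    (h : V α x n + 1 < P α n) : V α x (n + 1) + 1 < P α (n + 1) := by
  rw [V_succ, P_succ]
  have hx : (x n).val * P α n ≤ (α n - 1) * P α n :=
    Nat.mul_le_mul_right _ (by have := (x n).isLt; omega)
  have heq : (α n - 1) * P α n + P α n = P α n * α n := sub_one_mul_add (hα n)
  omega

lemma phi_key (hα : ∀ i, 2 ≤ α i) (x : ∀ i, Fin (α i)) : ∀ n : ℕ,
    V α (phi α x) (n + 1) = (V α x (n + 1) + 1) % P α (n + 1) ∧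
    ((x n).val ≤ (phiAux α x n).val ↔ V α x (n + 1) + 1 < P α (n + 1)) := by
  intro n
  induction n with
  | zero =>
      have hV : ∀ y : ∀ i, Fin (α i), V α y 1 = (y 0).val := by
        intro y; simp [V, P]
      have hP1 : P α 1 = α 0 := by simp [P]
      have hphi0 : (phiAux α x 0).val = ((x 0).val + 1) % α 0 := rfl
      constructor
      · rw [hV, hV, hP1]; exact hphi0
      · rw [hphi0, hV, hP1]; exact succ_mod_iff (hα 0) (x 0).isLt
  | succ n ih =>
      obtain ⟨ihV, ihC⟩ := ih
      have hP := P_pos hα (n + 1)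
      have hle := V_add_one_le hα x (n + 1)
      have hd : phiAux α x (n + 1) =
          if (x n).val ≤ (phiAux α x n).val then x (n + 1) else finSucc (x (n + 1)) := rfl
      by_cases hc : (x n).val ≤ (phiAux α x n).val
      · have hlt : V α x (n + 1) + 1 < P α (n + 1) := ihC.1 hc
        have hlt2 : V α x (n + 2) + 1 < P α (n + 2) := V_succ_lt hα x (n + 1) hlt
        have hdx : phiAux α x (n + 1) = x (n + 1) := by rw [hd, if_pos hc]
        constructor
        · have h1 : V α (phi α x) (n + 1) = V α x (n + 1) + 1 := by
            rw [ihV, Nat.mod_eq_of_lt hlt]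
          have h2 : (phi α x (n + 1)).val = (x (n + 1)).val := by
            show (phiAux α x (n + 1)).val = _; rw [hdx]
          rw [Nat.mod_eq_of_lt hlt2, V_succ (phi α x) (n + 1), h1, h2, V_succ x (n + 1)]
          omega
        · rw [hdx]; simp [hlt2]
      · have hge : ¬ (V α x (n + 1) + 1 < P α (n + 1)) := fun hl => hc (ihC.2 hl)
        have heqv : V α x (n + 1) + 1 = P α (n + 1) := by omega
        have hdx : phiAux α x (n + 1) = finSucc (x (n + 1)) := by rw [hd, if_neg hc]
        have hsv : (phiAux α x (n + 1)).val = ((x (n + 1)).val + 1) % α (n + 1) := by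
          rw [hdx]; rfl
        have hVzero : V α (phi α x) (n + 1) = 0 := by
          rw [ihV, heqv, Nat.mod_self]
        have hV2 : V α x (n + 2) + 1 = ((x (n + 1)).val + 1) * P α (n + 1) := by
          rw [V_succ]
          have : V α x (n + 1) + (x (n + 1)).val * P α (n + 1) + 1
              = P α (n + 1) + (x (n + 1)).val * P α (n + 1) := by omega
          rw [this, add_mul, one_mul]; ring
        constructor
        · rw [V_succ]
          show V α (phi α x) (n + 1) + (phiAux α x (n + 1)).val * P α (n + 1) = _
          rw [hVzero, hsv, zero_add, hV2, P_succ (n + 1), mul_comm (P α (n + 1)) (α (n + 1)),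
            Nat.mul_mod_mul_right]
        · show (x (n + 1)).val ≤ (phiAux α x (n + 1)).val ↔ _
          rw [hsv, hV2, P_succ (n + 1), mul_comm (P α (n + 1)) (α (n + 1)),
            succ_mod_iff (hα (n + 1)) (x (n + 1)).isLt]
          exact (Nat.mul_lt_mul_right hP).symm

lemma phi_V (hα : ∀ i, 2 ≤ α i) (x : ∀ i, Fin (α i)) (n : ℕ) :
    V α (phi α x) n = (V α x n + 1) % P α n := by
  cases n with
  | zero => simp [V, P]
  | succ n => exact (phi_key hα x n).1

lemma le_partial (f g : ℕ → ℕ)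
    (hfg : ∑' i : ℕ, (f i : ℝ≥0∞) ≤ ∑' i : ℕ, (g i : ℝ≥0∞)) (n : ℕ) :
    ∃ K, ∑ i ∈ Finset.range n, f i ≤ ∑ i ∈ Finset.range K, g i := by
  by_contra hc
  push_neg at hc
  set c := ∑ i ∈ Finset.range n, f i with hcdef
  have hc0 : 0 < c := lt_of_le_of_lt (Nat.zero_le _) (hc 0)
  have h1 : (c : ℝ≥0∞) ≤ ∑' i : ℕ, (g i : ℝ≥0∞) := by
    calc (c : ℝ≥0∞) = ∑ i ∈ Finset.range n, (f i : ℝ≥0∞) := by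
          rw [hcdef, Nat.cast_sum]
      _ ≤ ∑' i : ℕ, (f i : ℝ≥0∞) := ENNReal.sum_le_tsum _
      _ ≤ _ := hfg
  have h2 : ∑' i : ℕ, (g i : ℝ≥0∞) ≤ ((c - 1 : ℕ) : ℝ≥0∞) := by
    rw [ENNReal.tsum_eq_iSup_sum]
    refine iSup_le fun s => ?_
    obtain ⟨K, hK⟩ := s.exists_nat_subset_range
    calc ∑ i ∈ s, (g i : ℝ≥0∞) ≤ ∑ i ∈ Finset.range K, (g i : ℝ≥0∞) :=
          Finset.sum_le_sum_of_subset hK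
      _ = ((∑ i ∈ Finset.range K, g i : ℕ) : ℝ≥0∞) := by rw [Nat.cast_sum]
      _ ≤ _ := by exact_mod_cast Nat.le_sub_one_of_lt (hc K)
  have h4 : c ≤ c - 1 := by exact_mod_cast h1.trans h2
  omega

lemma prod_factorization (γ : ℕ → ℕ) (hγ : ∀ i, 2 ≤ γ i) (p n : ℕ) (hp : p.Prime) :
    (P γ n).factorization p = ∑ i ∈ Finset.range n, padicValNat p (γ i) := by
  rw [P, Nat.factorization_prod (fun i _ => by have := hγ i; omega)]
  rw [Finset.sum_apply']
  exact Finset.sum_congr rfl fun i _ => Nat.factorization_def _ hp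

lemma dvd_P (hα : ∀ i, 2 ≤ α i) (hβ : ∀ i, 2 ≤ β i)
    (hval : ∀ p : ℕ, p.Prime →
      ∑' i : ℕ, (padicValNat p (β i) : ℝ≥0∞) ≤ ∑' i : ℕ, (padicValNat p (α i) : ℝ≥0∞))
    (n : ℕ) : ∃ K, P β n ∣ P α K := by
  classical
  have hd : P β n ≠ 0 := (P_pos hβ n).ne'
  have key : ∀ p : ℕ, p.Prime → ∃ K, ∑ i ∈ Finset.range n, padicValNat p (β i)
      ≤ ∑ i ∈ Finset.range K, padicValNat p (α i) :=
    fun p hp => le_partial _ _ (hval p hp) n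
  set Kf : ℕ → ℕ := fun p => if hp : p.Prime then (key p hp).choose else 0 with hKf
  refine ⟨((P β n).primeFactors).sup Kf, ?_⟩
  rw [← Nat.factorization_le_iff_dvd hd (P_pos hα _).ne']
  rw [Finsupp.le_def]
  intro p
  by_cases hp : p.Prime
  · by_cases hpd : p ∣ P β n
    · have hmem : p ∈ (P β n).primeFactors := Nat.mem_primeFactors.2 ⟨hp, hpd, hd⟩
      have hK : Kf p ≤ ((P β n).primeFactors).sup Kf := Finset.le_sup hmem
      rw [prod_factorization β hβ p n hp, prod_factorization α hα p _ hp]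
      calc ∑ i ∈ Finset.range n, padicValNat p (β i)
          ≤ ∑ i ∈ Finset.range (Kf p), padicValNat p (α i) := by
            simpa only [hKf, dif_pos hp] using (key p hp).choose_spec
        _ ≤ _ := Finset.sum_le_sum_of_subset (Finset.range_subset_range.2 hK)
    · rw [Nat.factorization_eq_zero_of_not_dvd hpd]; exact Nat.zero_le _
  · rw [Nat.factorization_eq_zero_of_not_prime _ hp]; exact Nat.zero_le _

lemma resid_indep (x : ∀ i, Fin (α i)) {n K K' : ℕ}
    (h1 : P β n ∣ P α K) (h2 : P β n ∣ P α K') :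
    V α x K % P β n = V α x K' % P β n := by
  rcases le_total K K' with hle | hle
  · exact ((V_modeq x hle).of_dvd h1).symm
  · exact (V_modeq x hle).of_dvd h2

lemma exists_conj_map (α β : ℕ → ℕ) (hα : ∀ i, 2 ≤ α i) (hβ : ∀ i, 2 ≤ β i)
    (hdvd : ∀ n, ∃ K, P β n ∣ P α K) :
    ∃ h : (∀ i, Fin (α i)) → (∀ i, Fin (β i)), Continuous h ∧
      ∀ (x : ∀ i, Fin (α i)) (n K : ℕ), P β n ∣ P α K →
        V β (h x) n = V α x K % P β n := by
  classical
  choose m hm using fun n => hdvd (n + 1)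
  have hPb : ∀ n, 0 < P β n := P_pos hβ
  have hdig : ∀ (x : ∀ i, Fin (α i)) (n : ℕ),
      (V α x (m n) % P β (n + 1)) / P β n < β n := by
    intro x n
    have h1 : V α x (m n) % P β (n + 1) < P β (n + 1) := Nat.mod_lt _ (hPb (n + 1))
    have h2 : P β (n + 1) = β n * P β n := by rw [P_succ, mul_comm]
    exact (Nat.div_lt_iff_lt_mul (hPb n)).2 (lt_of_lt_of_le h1 h2.le)
  refine ⟨fun x n => ⟨(V α x (m n) % P β (n + 1)) / P β n, hdig x n⟩, ?_, ?_⟩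
  · apply continuous_pi
    intro n
    set F : (∀ i : Fin (m n), Fin (α i.val)) → Fin (β n) := fun y =>
      ⟨(((∑ i : Fin (m n), (y i).val * P α i.val) % P β (n + 1)) / P β n) % β n,
        Nat.mod_lt _ (by have := hβ n; omega)⟩ with hF
    have hfac : (fun x : ∀ i, Fin (α i) =>
        (⟨(V α x (m n) % P β (n + 1)) / P β n, hdig x n⟩ : Fin (β n)))
        = F ∘ (fun (x : ∀ i, Fin (α i)) (i : Fin (m n)) => x i.val) := by
      funext x
      apply Fin.ext
      show (V α x (m n) % P β (n + 1)) / P β n = _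
      have hsum : V α x (m n) = ∑ i : Fin (m n), (x i.val).val * P α i.val :=
        Finset.sum_range _
      calc (V α x (m n) % P β (n + 1)) / P β n
          = ((V α x (m n) % P β (n + 1)) / P β n) % β n :=
            (Nat.mod_eq_of_lt (hdig x n)).symm
        _ = _ := by rw [hsum]; rfl
    rw [hfac]
    exact Continuous.comp continuous_of_discreteTopology
      (continuous_pi fun i => continuous_apply _)
  · intro x n
    induction n with
    | zero => intro K hK; simp [V, P, Nat.mod_one]
    | succ n ih =>
        intro K hK
        have hb1 : P β (n + 1) ∣ P α (m n) := hm n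
        have hbn : P β n ∣ P α (m n) := (P_dvd n.le_succ).trans hb1
        rw [V_succ, ih (m n) hbn]
        show V α x (m n) % P β n
            + (V α x (m n) % P β (n + 1)) / P β n * P β n = _
        have hmm : V α x (m n) % P β n = (V α x (m n) % P β (n + 1)) % P β n :=
          (Nat.mod_mod_of_dvd _ (P_dvd n.le_succ)).symm
        rw [hmm, Nat.mod_add_div']
        exact resid_indep x hb1 hK

end BK

open BK in
/-- Block–Keesling: if M_α(p) = M_β(p) (the total p-adic valuation of the α(i), valued
in ℕ₀ ∪ {∞}) for every prime p, then the adding machines (Δ_α, φ_α) and (Δ_β, φ_β)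
are topologically conjugate. -/
theorem stmt7 (α β : ℕ → ℕ) (hα : ∀ i, 2 ≤ α i) (hβ : ∀ i, 2 ≤ β i)
    (h : ∀ p : ℕ, p.Prime →
      ∑' i : ℕ, (padicValNat p (α i) : ℝ≥0∞) = ∑' i : ℕ, (padicValNat p (β i) : ℝ≥0∞)) :
    ∃ e : (∀ i, Fin (α i)) ≃ₜ (∀ i, Fin (β i)),
      ∀ x : ∀ i, Fin (α i), e (phi α x) = phi β (e x) := by
  have hdvd1 : ∀ n, ∃ K, P β n ∣ P α K :=
    dvd_P hα hβ (fun p hp => (h p hp).symm.le)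
  have hdvd2 : ∀ n, ∃ K, P α n ∣ P β K :=
    dvd_P hβ hα (fun p hp => (h p hp).le)
  obtain ⟨hm, hcont, hspec⟩ := exists_conj_map α β hα hβ hdvd1
  obtain ⟨gm, gcont, gspec⟩ := exists_conj_map β α hβ hα hdvd2
  have hgh : ∀ x, gm (hm x) = x := by
    intro x
    apply ext_of_V hα
    intro n
    obtain ⟨K, hK⟩ := hdvd2 n
    obtain ⟨L, hL⟩ := hdvd1 K
    have hL' : P β K ∣ P α (max L n) := hL.trans (P_dvd (le_max_left _ _))
    rw [gspec (hm x) n K hK, hspec x K (max L n) hL', Nat.mod_mod_of_dvd _ hK]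
    have hmod : V α x (max L n) % P α n = V α x n % P α n :=
      (V_modeq x (le_max_right L n)).of_dvd dvd_rfl
    rw [hmod, Nat.mod_eq_of_lt (V_lt hα x n)]
  have hhg : ∀ y, hm (gm y) = y := by
    intro y
    apply ext_of_V hβ
    intro n
    obtain ⟨K, hK⟩ := hdvd1 n
    obtain ⟨L, hL⟩ := hdvd2 K
    have hL' : P α K ∣ P β (max L n) := hL.trans (P_dvd (le_max_left _ _))
    rw [hspec (gm y) n K hK, gspec y K (max L n) hL', Nat.mod_mod_of_dvd _ hK]
    have hmod : V β y (max L n) % P β n = V β y n % P β n :=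
      (V_modeq y (le_max_right L n)).of_dvd dvd_rfl
    rw [hmod, Nat.mod_eq_of_lt (V_lt hβ y n)]
  refine ⟨⟨⟨hm, gm, hgh, hhg⟩, hcont, gcont⟩, ?_⟩
  intro x
  show hm (phi α x) = phi β (hm x)
  apply ext_of_V hβ
  intro n
  obtain ⟨K, hK⟩ := hdvd1 n
  rw [hspec (phi α x) n K hK, phi_V hα x K, phi_V hβ (hm x) n, hspec x n K hK,
    Nat.mod_mod_of_dvd _ hK]
  exact Nat.ModEq.add_right 1 (Nat.mod_modEq (V α x K) (P β n)).symm
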